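/- Let a BIOS channel with finite output alphabet 𝒴 be given by transition probabilities P(y|x), x ∈ 𝔽₂, and involution π with P(y|1) = P(π(y)|0). Let C and W be independent 𝔽₂ⁿ-valued random variables, let Y be the output of the memoryless BIOS channel with input X = C + W, and let Ỹ be the output with input C. Then the conditional mutual information I(C; Y | W) does not depend on the distribution of W and equals I(C; Ỹ). -/

import Mathlib

open scoped BigOperators

open Classical in
/-- The probability of an event `A` under a probability mass function `P`
on a finite sample space `Ω`. -/
noncomputable def prEvent {Ω : Type*} [Fintype Ω] (P : Ω → ℝ) (A : Ω → Prop) : ℝ :=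
  ∑ ω : Ω, if A ω then P ω else 0

/-- The probability mass function of a random variable `X`. -/
noncomputable def distOf {Ω α : Type*} [Fintype Ω] (P : Ω → ℝ) (X : Ω → α) (a : α) : ℝ :=
  prEvent P (fun ω => X ω = a)

/-- Shannon entropy (in nats) of a finitely-valued random variable `X`. -/
noncomputable def entropy {Ω α : Type*} [Fintype Ω] [Fintype α]
    (P : Ω → ℝ) (X : Ω → α) : ℝ :=
  -∑ a : α, distOf P X a * Real.log (distOf P X a)

/-- Mutual information `I(X; Y) = H(X) + H(Y) - H(X, Y)`. -/
noncomputable def mutualInfo {Ω α β : Type*} [Fintype Ω] [Fintype α] [Fintype β]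
    (P : Ω → ℝ) (X : Ω → α) (Y : Ω → β) : ℝ :=
  entropy P X + entropy P Y - entropy P (fun ω => (X ω, Y ω))

/-- Conditional mutual information
`I(X; Y | Z) = H(X, Z) + H(Y, Z) - H(X, Y, Z) - H(Z)`. -/
noncomputable def condMutualInfo {Ω α β γ : Type*} [Fintype Ω] [Fintype α] [Fintype β] [Fintype γ]
    (P : Ω → ℝ) (X : Ω → α) (Y : Ω → β) (Z : Ω → γ) : ℝ :=
  entropy P (fun ω => (X ω, Z ω)) + entropy P (fun ω => (Y ω, Z ω))
    - entropy P (fun ω => (X ω, Y ω, Z ω)) - entropy P Z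

private lemma mul_log_mul (a b : ℝ) :
    a * b * Real.log (a * b) = b * (a * Real.log a) + a * (b * Real.log b) := by
  by_cases ha : a = 0
  · simp [ha]
  by_cases hb : b = 0
  · simp [hb]
  rw [Real.log_mul ha hb]; ring

private lemma ent_prod {α β : Type*} [Fintype α] [Fintype β] (p : α → ℝ) (q : β → ℝ)
    (hp : ∑ a, p a = 1) (hq : ∑ b, q b = 1) :
    -∑ a : α, ∑ b : β, p a * q b * Real.log (p a * q b)
      = (-∑ a, p a * Real.log (p a)) + (-∑ b, q b * Real.log (q b)) := by
  simp_rw [mul_log_mul, Finset.sum_add_distrib, ← Finset.sum_mul, ← Finset.mul_sum, hq]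
  rw [← Finset.sum_mul, hp]
  ring

/-- Compute `distOf` for a coordinate-projection-like map via an equivalence. -/
private lemma distOf_equiv_proj {Ω α β : Type*} [Fintype Ω] [Fintype α] [Fintype β]
    (P : Ω → ℝ) (e : Ω ≃ α × β) (X : Ω → α) (hX : ∀ ω, X ω = (e ω).1) (a : α) :
    distOf P X a = ∑ b, P (e.symm (a, b)) := by
  classical
  simp only [distOf, prEvent]
  rw [← Equiv.sum_comp e.symm (fun ω => if X ω = a then P ω else 0), Fintype.sum_prod_type]
  have h1 : ∀ x : α, x ∈ Finset.univ → x ≠ a →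
      (∑ b, if X (e.symm (x, b)) = a then P (e.symm (x, b)) else 0) = 0 := by
    intro x _ hx
    refine Finset.sum_eq_zero fun b _ => ?_
    rw [if_neg]
    rw [hX, Equiv.apply_symm_apply]
    exact hx
  rw [Finset.sum_eq_single a h1 (by simp)]
  refine Finset.sum_congr rfl fun b _ => ?_
  rw [if_pos]
  rw [hX, Equiv.apply_symm_apply]

/-- For a BIOS memoryless channel (transition probabilities
`Pch y x`, involution `π` with `P(y|1) = P(π(y)|0)`), let `C` and `W` be independent
`𝔽₂ⁿ`-valued random variables (with pmfs `pC` and `pW`), let `K` be the joint pmf of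
`(C, W, Y)` where `Y` is the channel output with input `X = C + W`, and let `Jt` be
the joint pmf of `(C, Ỹ)` where `Ỹ` is the channel output with input `C`.  Then
`I(C; Y | W) = I(C; Ỹ)`; in particular it does not depend on the distribution of `W`. -/
theorem bios_condMutualInfo_eq
    {𝒴 : Type*} [Fintype 𝒴] (n : ℕ)
    (Pch : 𝒴 → ZMod 2 → ℝ)
    (hPch0 : ∀ y x, 0 ≤ Pch y x) (hPch1 : ∀ x, ∑ y : 𝒴, Pch y x = 1)
    (π : 𝒴 → 𝒴) (hπ : ∀ y, π (π y) = y)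
    (hsym : ∀ y, Pch y 1 = Pch (π y) 0)
    (pC pW : (Fin n → ZMod 2) → ℝ)
    (hpC0 : ∀ c, 0 ≤ pC c) (hpC1 : ∑ c, pC c = 1)
    (hpW0 : ∀ w, 0 ≤ pW w) (hpW1 : ∑ w, pW w = 1)
    (K : ((Fin n → ZMod 2) × (Fin n → ZMod 2) × (Fin n → 𝒴)) → ℝ)
    (hK : ∀ c w y, K (c, w, y) = pC c * pW w * ∏ i : Fin n, Pch (y i) (c i + w i))
    (Jt : ((Fin n → ZMod 2) × (Fin n → 𝒴)) → ℝ)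
    (hJt : ∀ c y, Jt (c, y) = pC c * ∏ i : Fin n, Pch (y i) (c i)) :
    condMutualInfo K (fun t => t.1) (fun t => t.2.2) (fun t => t.2.1)
      = mutualInfo Jt Prod.fst Prod.snd := by
  classical
  have hZ : ∀ x : ZMod 2, x = 0 ∨ x = 1 := by decide
  -- pointwise channel symmetry
  have step : ∀ (y : 𝒴) (c w : ZMod 2),
      Pch y (c + w) = Pch (if w = 1 then π y else y) c := by
    intro y c w
    rcases hZ w with hw | hw <;> subst hw
    · simp
    · rw [if_pos rfl]
      rcases hZ c with hc | hc <;> subst hc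
      · simpa using hsym y
      · rw [show (1 + 1 : ZMod 2) = 0 by decide, hsym (π y), hπ]
  -- the per-position flip map
  set Φ : (Fin n → ZMod 2) → (Fin n → 𝒴) → (Fin n → 𝒴) :=
    fun w y i => if w i = 1 then π (y i) else y i with hΦdef
  have hΦinv : ∀ w, Function.Involutive (Φ w) := by
    intro w y
    funext i
    by_cases h : w i = 1 <;> simp [Φ, h, hπ]
  have hΦsum : ∀ (w : Fin n → ZMod 2) (F : (Fin n → 𝒴) → ℝ),
      ∑ y, F (Φ w y) = ∑ y, F y := fun w F => Equiv.sum_comp (hΦinv w).toPerm F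
  have keyprod : ∀ (c w : Fin n → ZMod 2) (y : Fin n → 𝒴),
      (∏ i, Pch (y i) (c i + w i)) = ∏ i, Pch (Φ w y i) (c i) := by
    intro c w y
    refine Finset.prod_congr rfl fun i _ => ?_
    simpa [Φ] using step (y i) (c i) (w i)
  have chsum : ∀ x : Fin n → ZMod 2, ∑ y : Fin n → 𝒴, ∏ i, Pch (y i) (x i) = 1 := by
    intro x
    have h := Finset.prod_univ_sum (ι := Fin n) (t := fun _ => (Finset.univ : Finset 𝒴))
      (f := fun i y => Pch y (x i))
    rw [Fintype.piFinset_univ] at h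
    rw [← h]
    simp [hPch1]
  set q : (Fin n → 𝒴) → ℝ := fun y => ∑ c, Jt (c, y) with hqdef
  have hq1 : ∑ y, q y = 1 := by
    rw [hqdef, Finset.sum_comm]
    simp_rw [hJt, ← Finset.mul_sum, chsum, mul_one, hpC1]
  have hJt1 : ∑ z : (Fin n → ZMod 2) × (Fin n → 𝒴), Jt z = 1 := by
    rw [Fintype.sum_prod_type]
    simp_rw [hJt, ← Finset.mul_sum, chsum, mul_one, hpC1]
  -- distributions under K
  have dW : ∀ w₀, distOf K (fun t => t.2.1) w₀ = pW w₀ := by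
    intro w₀
    rw [distOf_equiv_proj K
      ⟨fun ω => (ω.2.1, (ω.1, ω.2.2)), fun z => (z.2.1, z.1, z.2.2),
        fun _ => rfl, fun _ => rfl⟩ (fun t => t.2.1) (fun ω => rfl) w₀]
    simp only [Equiv.coe_fn_symm_mk]
    rw [Fintype.sum_prod_type]
    simp_rw [hK, mul_assoc, ← Finset.mul_sum, chsum, mul_one,
      ← Finset.sum_mul, hpC1, one_mul]
  have dCW : ∀ a : (Fin n → ZMod 2) × (Fin n → ZMod 2),
      distOf K (fun t => (t.1, t.2.1)) a = pC a.1 * pW a.2 := by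
    intro a
    rw [distOf_equiv_proj K
      ⟨fun ω => ((ω.1, ω.2.1), ω.2.2), fun z => (z.1.1, z.1.2, z.2),
        fun _ => rfl, fun _ => rfl⟩ (fun t => (t.1, t.2.1)) (fun ω => rfl) a]
    simp only [Equiv.coe_fn_symm_mk]
    simp_rw [hK, mul_assoc, ← Finset.mul_sum, chsum, mul_one]
  have dYW : ∀ a : (Fin n → 𝒴) × (Fin n → ZMod 2),
      distOf K (fun t => (t.2.2, t.2.1)) a = pW a.2 * q (Φ a.2 a.1) := by
    intro a
    rw [distOf_equiv_proj K
      ⟨fun ω => ((ω.2.2, ω.2.1), ω.1), fun z => (z.2, z.1.2, z.1.1),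
        fun _ => rfl, fun _ => rfl⟩ (fun t => (t.2.2, t.2.1)) (fun ω => rfl) a]
    simp only [Equiv.coe_fn_symm_mk]
    simp_rw [hK, keyprod, hqdef, hJt, Finset.mul_sum]
    exact Finset.sum_congr rfl fun c _ => by ring
  have dT : ∀ a : (Fin n → ZMod 2) × (Fin n → 𝒴) × (Fin n → ZMod 2),
      distOf K (fun t => (t.1, t.2.2, t.2.1)) a = pW a.2.2 * Jt (a.1, Φ a.2.2 a.2.1) := by
    intro a
    rw [distOf_equiv_proj K
      ⟨fun ω => ((ω.1, ω.2.2, ω.2.1), ()), fun z => (z.1.1, z.1.2.2, z.1.2.1),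
        fun _ => rfl, fun _ => rfl⟩ (fun t => (t.1, t.2.2, t.2.1)) (fun ω => rfl) a]
    simp only [Equiv.coe_fn_symm_mk]
    rw [Finset.sum_const, Finset.card_univ]
    simp [hK, keyprod, hJt]
    ring
  -- distributions under Jt
  have dC' : ∀ c₀, distOf Jt Prod.fst c₀ = pC c₀ := by
    intro c₀
    rw [distOf_equiv_proj Jt (Equiv.refl _) Prod.fst (fun ω => rfl) c₀]
    simp only [Equiv.refl_symm, Equiv.refl_apply]
    simp_rw [hJt, ← Finset.mul_sum, chsum, mul_one]
    
  have dY' : ∀ y₀, distOf Jt Prod.snd y₀ = q y₀ := by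
    intro y₀
    rw [distOf_equiv_proj Jt (Equiv.prodComm _ _) Prod.snd (fun ω => rfl) y₀]
    simp only [Equiv.prodComm_symm, Equiv.prodComm_apply, Prod.swap_prod_mk]
    rfl
  have dJ' : ∀ z, distOf Jt (fun ω => (Prod.fst ω, Prod.snd ω)) z = Jt z := by
    intro z
    rw [distOf_equiv_proj Jt
      ⟨fun ω => (ω, ()), fun z => z.1, fun _ => rfl, fun _ => rfl⟩
      (fun ω => (Prod.fst ω, Prod.snd ω)) (fun ω => rfl) z]
    simp
  -- assemble
  have HA : -(∑ a : (Fin n → ZMod 2) × (Fin n → ZMod 2),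
        pC a.1 * pW a.2 * Real.log (pC a.1 * pW a.2))
      = (-∑ c, pC c * Real.log (pC c)) + (-∑ w, pW w * Real.log (pW w)) := by
    rw [Fintype.sum_prod_type]
    exact ent_prod pC pW hpC1 hpW1
  have HB : -(∑ a : (Fin n → 𝒴) × (Fin n → ZMod 2),
        pW a.2 * q (Φ a.2 a.1) * Real.log (pW a.2 * q (Φ a.2 a.1)))
      = (-∑ w, pW w * Real.log (pW w)) + (-∑ y, q y * Real.log (q y)) := by
    have e1 : (∑ a : (Fin n → 𝒴) × (Fin n → ZMod 2),
          pW a.2 * q (Φ a.2 a.1) * Real.log (pW a.2 * q (Φ a.2 a.1)))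
        = ∑ w, ∑ y, pW w * q y * Real.log (pW w * q y) := by
      rw [Fintype.sum_prod_type, Finset.sum_comm]
      exact Finset.sum_congr rfl fun w _ =>
        hΦsum w (fun y => pW w * q y * Real.log (pW w * q y))
    rw [e1]
    exact ent_prod pW q hpW1 hq1
  have HC : -(∑ a : (Fin n → ZMod 2) × (Fin n → 𝒴) × (Fin n → ZMod 2),
        pW a.2.2 * Jt (a.1, Φ a.2.2 a.2.1) * Real.log (pW a.2.2 * Jt (a.1, Φ a.2.2 a.2.1)))
      = (-∑ w, pW w * Real.log (pW w))
        + (-∑ z : (Fin n → ZMod 2) × (Fin n → 𝒴), Jt z * Real.log (Jt z)) := by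
    have e2 : (∑ a : (Fin n → ZMod 2) × (Fin n → 𝒴) × (Fin n → ZMod 2),
          pW a.2.2 * Jt (a.1, Φ a.2.2 a.2.1) * Real.log (pW a.2.2 * Jt (a.1, Φ a.2.2 a.2.1)))
        = ∑ w, ∑ z : (Fin n → ZMod 2) × (Fin n → 𝒴),
            pW w * Jt z * Real.log (pW w * Jt z) := by
      calc (∑ a : (Fin n → ZMod 2) × (Fin n → 𝒴) × (Fin n → ZMod 2),
              pW a.2.2 * Jt (a.1, Φ a.2.2 a.2.1) * Real.log (pW a.2.2 * Jt (a.1, Φ a.2.2 a.2.1)))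
          = ∑ c, ∑ p : (Fin n → 𝒴) × (Fin n → ZMod 2),
              pW p.2 * Jt (c, Φ p.2 p.1) * Real.log (pW p.2 * Jt (c, Φ p.2 p.1)) :=
            Fintype.sum_prod_type _
        _ = ∑ c, ∑ w, ∑ y, pW w * Jt (c, Φ w y) * Real.log (pW w * Jt (c, Φ w y)) :=
            Finset.sum_congr rfl fun c _ => Fintype.sum_prod_type_right _
        _ = ∑ w, ∑ c, ∑ y, pW w * Jt (c, Φ w y) * Real.log (pW w * Jt (c, Φ w y)) :=
            Finset.sum_comm
        _ = ∑ w, ∑ c, ∑ y, pW w * Jt (c, y) * Real.log (pW w * Jt (c, y)) :=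
            Finset.sum_congr rfl fun w _ => Finset.sum_congr rfl fun c _ =>
              hΦsum w (fun y => pW w * Jt (c, y) * Real.log (pW w * Jt (c, y)))
        _ = ∑ w, ∑ z : (Fin n → ZMod 2) × (Fin n → 𝒴),
              pW w * Jt z * Real.log (pW w * Jt z) :=
            Finset.sum_congr rfl fun w _ =>
              (Fintype.sum_prod_type
                (fun z : (Fin n → ZMod 2) × (Fin n → 𝒴) =>
                  pW w * Jt z * Real.log (pW w * Jt z))).symm
    rw [e2]
    exact ent_prod pW Jt hpW1 hJt1
  simp only [condMutualInfo, mutualInfo, entropy, dW, dCW, dYW, dT, dC', dY', dJ']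
  linarith [HA, HB, HC]
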